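/- arXiv:2206.14035 — 3 statements merged into one kernel-verified Lean document; each statement's English description precedes it below -/
import Mathlib

section
/- For every natural number j, W(j) = 2(p^n − 1)·r(j) + 2p^j + 1; equivalently, 2p^j + 1 + 2·r(j)·(p^n − 1) = W(j). (This is the closed formula for the cohomological degree of the generator w_{n+j}, and says the Adams differential d^{r(j)}(y_j) = v^{r(j)} w_{n+j} is degree-consistent.) -/
/-- `q(k) = ∑_{m<k} p^{m(n+1)}`. -/
def qq (p n k : ℕ) : ℕ := ∑ m ∈ Finset.range k, p ^ (m * (n + 1))

/-- `r(j) = p^{i+1}(p^n-1) q(k) + k + p^i` where `j = i + k(n+1)`, `0 ≤ i ≤ n`. -/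
def rr (p n j : ℕ) : ℕ :=
  p ^ (j % (n + 1) + 1) * (p ^ n - 1) * qq p n (j / (n + 1)) + j / (n + 1) + p ^ (j % (n + 1))

/-- `r'(j) = p^{j+1} - r(j)`. -/
def rr' (p n j : ℕ) : ℕ := p ^ (j + 1) - rr p n j

/-- `W(j) = |w_{n+j}|`: `W(j) = 2p^{n+j}+1` for `0 ≤ j ≤ n`, and
`W(j+n+1) = 2p^j(p-1) + W(j) + 2(p^n-1)(p^{n+j+1}+1)`. -/
def WW (p n : ℕ) (j : ℕ) : ℕ :=
  if h : j < n + 1 then 2 * p ^ (n + j) + 1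
  else 2 * p ^ (j - (n + 1)) * (p - 1) + WW p n (j - (n + 1))
       + 2 * (p ^ n - 1) * (p ^ ((j - (n + 1)) + n + 1) + 1)
termination_by j
decreasing_by omega

/-!
Both sides satisfy the same recursion in steps of `n + 1`. Passing from `j = i + k(n+1)` to
`j + n + 1` adds the summand `p ^ (k(n+1))` to `q(k)`, so `r` grows by `p ^ (j + 1) (p ^ n - 1) + 1`,
and then the right-hand side grows by exactly the increment in the recursion for `W`. For `j ≤ n`
one has `r(j) = p ^ j`, which gives the initial values `2 p ^ (n + j) + 1`.
-/

theorem rr_of_lt {p n j : ℕ} (hj : j < n + 1) : rr p n j = p ^ j := by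
  simp [rr, qq, Nat.mod_eq_of_lt hj, Nat.div_eq_of_lt hj]

theorem rr_add_succ (p n j : ℕ) :
    rr p n (j + (n + 1)) = rr p n j + p ^ (j + 1) * (p ^ n - 1) + 1 := by
  have hmod : (j + (n + 1)) % (n + 1) = j % (n + 1) := Nat.add_mod_right _ _
  have hdiv : (j + (n + 1)) / (n + 1) = j / (n + 1) + 1 := Nat.add_div_right _ n.succ_pos
  have hpow : p ^ (j % (n + 1) + 1) * p ^ (j / (n + 1) * (n + 1)) = p ^ (j + 1) := by
    rw [← pow_add, add_right_comm, Nat.mod_add_div']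
  rw [rr, rr, hmod, hdiv, qq, Finset.sum_range_succ, ← qq]
  zify at hpow ⊢
  linear_combination ((p ^ n - 1 : ℕ) : ℤ) * hpow

theorem WW_of_lt {p n j : ℕ} (hj : j < n + 1) : WW p n j = 2 * p ^ (n + j) + 1 := by
  rw [WW, dif_pos hj]

theorem WW_add_succ (p n j : ℕ) :
    WW p n (j + (n + 1)) =
      2 * p ^ j * (p - 1) + WW p n j + 2 * (p ^ n - 1) * (p ^ (j + n + 1) + 1) := by
  rw [WW, dif_neg (by omega), Nat.add_sub_cancel]

theorem WW_eq_of_one_le {p : ℕ} (hp : 1 ≤ p) (n j : ℕ) :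
    WW p n j = 2 * (p ^ n - 1) * rr p n j + 2 * p ^ j + 1 := by
  have hpn : 1 ≤ p ^ n := Nat.one_le_pow _ _ hp
  induction j using Nat.strong_induction_on with
  | _ j ih =>
    rcases lt_or_ge j (n + 1) with hj | hj
    · rw [WW_of_lt hj, rr_of_lt hj]
      zify [hpn]
      ring
    · obtain ⟨i, rfl⟩ := Nat.exists_eq_add_of_le' hj
      rw [WW_add_succ, rr_add_succ, ih i (by omega)]
      zify [hp, hpn]
      ring

theorem W_closed_formula_general (p n : ℕ) (hp : p.Prime) (j : ℕ) :
    WW p n j = 2 * (p ^ n - 1) * rr p n j + 2 * p ^ j + 1 :=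
  WW_eq_of_one_le hp.one_lt.le n j

/-- Closed formula for the degree of `w_{n+j}`:
`W(j) = 2(p^n-1)*r(j) + 2p^j + 1`, so the Adams differential
`d^{r(j)}(y_j) = v^{r(j)} w_{n+j}` is degree-consistent. -/
theorem W_closed_formula (p n : ℕ) (hp : p.Prime) (hn : 1 ≤ n) (j : ℕ) :
    WW p n j = 2 * (p ^ n - 1) * rr p n j + 2 * p ^ j + 1 :=
  W_closed_formula_general p n hp j
end

section
/- If p is an odd prime, then for every natural number j one has the strict inequalities r(j) < r'(j) and r'(j) < r(j+1). -/
/-! As `r'(j) = p^(j+1) - r(j)`, the claims are `2 r(j) < p^(j+1)` and `p^(j+1) < r(j) + r(j+1)`.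
Write `j = i + (n + 1) k` with `i ≤ n` and put `a = p^i`, `B = p^n - 1`, `m = p^(n+1) - 1`,
`q = q(k)`. The geometric sum gives `q m + 1 = p^((n+1) k)`, so `p^(j+1) = a p (q m + 1)` while
`r(j) = a p B q + k + a`. As `m = p B + (p - 1)`, the first claim follows once `p ≥ 3` (using
`k ≤ q`), and the second from `p - 1 ≤ B`; when `i = n` the index of `r(j+1)` carries into `k + 1`,
and `q(k+1) = q m + q + 1` takes the place of `q`. -/

lemma pow_succ_sub_one_eq (p n : ℕ) : p ^ (n + 1) - 1 = p * (p ^ n - 1) + (p - 1) := by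
  rcases p.eq_zero_or_pos with rfl | hp
  · simp
  · have : p ≤ p * p ^ n := Nat.le_mul_of_pos_right p (Nat.one_le_pow n p hp)
    rw [pow_succ', Nat.mul_sub_one]
    omega

lemma sub_one_le_pow_sub_one (p : ℕ) {n : ℕ} (hn : n ≠ 0) : p - 1 ≤ p ^ n - 1 :=
  Nat.sub_le_sub_right (Nat.le_self_pow hn p) 1

lemma exists_eq_add_mul (n j : ℕ) : ∃ i k, i ≤ n ∧ j = i + (n + 1) * k :=
  ⟨j % (n + 1), j / (n + 1), Nat.lt_succ_iff.mp (Nat.mod_lt _ n.succ_pos),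
    (Nat.mod_add_div j (n + 1)).symm⟩

section

variable {p n : ℕ}

lemma qq_succ (k : ℕ) : qq p n (k + 1) = qq p n k + p ^ ((n + 1) * k) := by
  rw [qq, Finset.sum_range_succ, mul_comm]
  rfl

lemma qq_eq_geom_sum (k : ℕ) : qq p n k = ∑ m ∈ Finset.range k, (p ^ (n + 1)) ^ m :=
  Finset.sum_congr rfl fun m _ => by rw [← pow_mul, mul_comm]

lemma qq_mul_add_one (hp : 0 < p) (k : ℕ) :
    qq p n k * (p ^ (n + 1) - 1) + 1 = p ^ ((n + 1) * k) := by
  have h := geom_sum_mul_add (p ^ (n + 1) - 1) k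
  rwa [Nat.sub_add_cancel (Nat.one_le_pow _ _ hp), ← pow_mul, ← qq_eq_geom_sum] at h

lemma le_qq (hp : 0 < p) (k : ℕ) : k ≤ qq p n k := by
  simpa [qq] using Finset.card_nsmul_le_sum (Finset.range k) (fun m => p ^ (m * (n + 1))) 1
    fun m _ => Nat.one_le_pow _ _ hp

lemma rr_add_mul {i : ℕ} (hi : i ≤ n) (k : ℕ) :
    rr p n (i + (n + 1) * k) = p ^ (i + 1) * (p ^ n - 1) * qq p n k + k + p ^ i := by
  have hmod : (i + (n + 1) * k) % (n + 1) = i := by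
    rw [Nat.add_mul_mod_self_left, Nat.mod_eq_of_lt (by omega)]
  have hdiv : (i + (n + 1) * k) / (n + 1) = k := by
    rw [Nat.add_mul_div_left _ _ (by omega), Nat.div_eq_of_lt (by omega), zero_add]
  rw [rr, hmod, hdiv]

lemma pow_add_mul_succ (hp : 0 < p) (i k : ℕ) :
    p ^ (i + (n + 1) * k + 1) = p ^ (i + 1) * (qq p n k * (p ^ (n + 1) - 1) + 1) := by
  rw [qq_mul_add_one hp, ← pow_add, add_right_comm]

lemma two_mul_rr_lt_pow (hp : 3 ≤ p) (j : ℕ) : 2 * rr p n j < p ^ (j + 1) := by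
  obtain ⟨i, k, hi, rfl⟩ := exists_eq_add_mul n j
  have hm := pow_succ_sub_one_eq p n
  have hk : k ≤ qq p n k := le_qq (by omega) k
  rw [rr_add_mul hi, pow_add_mul_succ (by omega), pow_succ]
  have ha : 0 < p ^ i := by positivity
  set a := p ^ i
  set q := qq p n k
  set B := p ^ n - 1
  set m := p ^ (n + 1) - 1
  have h1 : a * p * q * (p * B + 2) ≤ a * p * q * m := Nat.mul_le_mul_left _ (by omega)
  have h2 : 2 * (a * p * B * q) ≤ p * (a * p * B * q) := Nat.mul_le_mul_right _ (by omega)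
  have h3 : k ≤ a * p * q := hk.trans (Nat.le_mul_of_pos_left q (by positivity))
  have h4 : 2 * a < a * p := by nlinarith
  linarith

lemma pow_lt_rr_add_rr_succ_of_lt (hp : 0 < p) {i : ℕ} (hi : i < n) (k : ℕ) :
    p ^ (i + (n + 1) * k + 1) < rr p n (i + (n + 1) * k) + rr p n (i + (n + 1) * k + 1) := by
  have hm := pow_succ_sub_one_eq p n
  have hpB := sub_one_le_pow_sub_one p (n := n) (by omega)
  rw [pow_add_mul_succ hp, rr_add_mul hi.le, add_right_comm i, rr_add_mul hi,
    pow_succ _ (i + 1), pow_succ _ i]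
  have ha : 0 < p ^ i := by positivity
  set a := p ^ i
  set q := qq p n k
  set B := p ^ n - 1
  set m := p ^ (n + 1) - 1
  have h1 : a * p * q * m ≤ a * p * q * (p * B + B) := Nat.mul_le_mul_left _ (by omega)
  linarith

lemma pow_lt_rr_add_rr_succ_of_eq (hp : 0 < p) (hn : n ≠ 0) (k : ℕ) :
    p ^ (n + (n + 1) * k + 1) < rr p n (n + (n + 1) * k) + rr p n (n + (n + 1) * k + 1) := by
  have hm := pow_succ_sub_one_eq p n
  have hpB := sub_one_le_pow_sub_one p hn
  rw [pow_add_mul_succ hp, rr_add_mul le_rfl,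
    show n + (n + 1) * k + 1 = 0 + (n + 1) * (k + 1) by ring, rr_add_mul (Nat.zero_le _),
    qq_succ, ← qq_mul_add_one hp, pow_zero, pow_one]
  have hB : p ^ n = p ^ n - 1 + 1 := (Nat.sub_add_cancel (Nat.one_le_pow n p hp)).symm
  have hP : p ^ (n + 1) = p ^ (n + 1) - 1 + 1 := (Nat.sub_add_cancel (Nat.one_le_pow _ p hp)).symm
  set q := qq p n k
  set B := p ^ n - 1
  set m := p ^ (n + 1) - 1
  rw [hB, hP]
  have h1 : (m + 1) * q * m ≤ (m + 1) * q * (p * B + B) := Nat.mul_le_mul_left _ (by omega)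
  linarith

lemma pow_lt_rr_add_rr_succ (hp : 0 < p) (hn : n ≠ 0) (j : ℕ) :
    p ^ (j + 1) < rr p n j + rr p n (j + 1) := by
  obtain ⟨i, k, hi, rfl⟩ := exists_eq_add_mul n j
  rcases hi.lt_or_eq with hi | rfl
  · exact pow_lt_rr_add_rr_succ_of_lt hp hi k
  · exact pow_lt_rr_add_rr_succ_of_eq hp hn k

end

/-- For odd primes `p`: `r(j) < r'(j) < r(j+1)` for all `j`. -/
theorem r_lt_r'_lt_r_succ_odd (p n : ℕ) (hp : p.Prime) (hodd : Odd p) (hn : 1 ≤ n) (j : ℕ) :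
    rr p n j < rr' p n j ∧ rr' p n j < rr p n (j + 1) := by
  have h₁ := two_mul_rr_lt_pow (n := n) (hp.odd_iff.mp hodd) j
  have h₂ := pow_lt_rr_add_rr_succ hp.pos (Nat.one_le_iff_ne_zero.mp hn) j
  unfold rr'
  omega
end

section
/- Let p be an odd prime and n ≥ 2. Then for every natural number j ≥ 1, p^{j+1} − r(j+1) ≤ r'(j−1). (This is the key inequality of Lemma 7.2 showing that for n > 1 a differential d^r(w_{n+j+s}) = v^r z_{n+j+1} with s > 0 would be too short to exist on the relevant page of the Adams spectral sequence.) -/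
lemma pow_sub_one_mul_qq (p n k : ℕ) :
    ((p : ℤ) ^ (n + 1) - 1) * qq p n k = (p : ℤ) ^ (k * (n + 1)) - 1 := by
  simp only [qq, Nat.cast_sum, Nat.cast_pow, pow_mul']
  exact mul_geom_sum _ k

def rrDefect (p n j : ℕ) : ℤ :=
  ((p : ℤ) - 1) * (p : ℤ) ^ (j % (n + 1)) + ((p : ℤ) ^ (n + 1) - 1) * (j / (n + 1) : ℕ)

lemma pow_sub_one_mul_rr {p : ℕ} (hp : 1 ≤ p) (n j : ℕ) :
    ((p : ℤ) ^ (n + 1) - 1) * rr p n j =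
      p * ((p : ℤ) ^ n - 1) * (p : ℤ) ^ j + rrDefect p n j := by
  have hj : (p : ℤ) ^ j = (p : ℤ) ^ (j % (n + 1)) * (p : ℤ) ^ (j / (n + 1) * (n + 1)) := by
    rw [← pow_add, Nat.mod_add_div']
  have hq := pow_sub_one_mul_qq p n (j / (n + 1))
  simp only [rr, rrDefect, Nat.cast_add, Nat.cast_mul, Nat.cast_pow,
    Nat.cast_sub (Nat.one_le_pow n p hp), Nat.cast_one]
  rw [hj]
  linear_combination (p : ℤ) ^ (j % (n + 1) + 1) * ((p : ℤ) ^ n - 1) * hq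

lemma rrDefect_add_mul (p : ℕ) {n i : ℕ} (hi : i < n + 1) (k : ℕ) :
    rrDefect p n (i + (n + 1) * k) =
      ((p : ℤ) - 1) * (p : ℤ) ^ i + ((p : ℤ) ^ (n + 1) - 1) * k := by
  obtain ⟨hk, hi⟩ := (Nat.div_mod_unique (Nat.succ_pos n)).2 ⟨rfl, hi⟩
  rw [rrDefect, hk, hi]

lemma rrDefect_monotone {p : ℕ} (hp : 1 ≤ p) (n : ℕ) : Monotone (rrDefect p n) := by
  refine monotone_nat_of_le_succ fun j => ?_
  have hp' : (1 : ℤ) ≤ p := by exact_mod_cast hp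
  obtain ⟨i, k, hi, rfl⟩ : ∃ i k, i < n + 1 ∧ j = i + (n + 1) * k :=
    ⟨j % (n + 1), j / (n + 1), Nat.mod_lt j (Nat.succ_pos n), (Nat.mod_add_div j (n + 1)).symm⟩
  rw [rrDefect_add_mul p hi]
  rcases Nat.lt_or_ge (i + 1) (n + 1) with hin | hin
  · rw [show i + (n + 1) * k + 1 = (i + 1) + (n + 1) * k by ring, rrDefect_add_mul p hin,
      pow_succ (p : ℤ) i]
    nlinarith [mul_nonneg (sub_nonneg.2 hp') (pow_nonneg (zero_le_one.trans hp') i)]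
  · -- at the end of a block, `(p - 1) p ^ n ≤ p ^ (n + 1) - 1` pays for resetting the power
    obtain rfl : n = i := by omega
    rw [show n + (n + 1) * k + 1 = 0 + (n + 1) * (k + 1) by ring,
      rrDefect_add_mul p (Nat.succ_pos n), pow_succ, pow_zero, Nat.cast_succ]
    nlinarith [one_le_pow₀ (n := n) hp']

lemma pow_add_two_add_rr_le {p n : ℕ} (hp : 2 ≤ p) (hn : 1 ≤ n) (m : ℕ) :
    p ^ (m + 2) + rr p n m ≤ p ^ (m + 1) + rr p n (m + 2) := by
  have hp1 : 1 ≤ p := by omega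
  have hp' : (2 : ℤ) ≤ p := by exact_mod_cast hp
  have hD : (0 : ℤ) < (p : ℤ) ^ (n + 1) - 1 :=
    sub_pos.2 (one_lt_pow₀ (by linarith) (Nat.succ_ne_zero n))
  have hpn : (p : ℤ) ≤ (p : ℤ) ^ n := le_self_pow₀ (by linarith) (by omega)
  have hmain : (0 : ℤ) ≤ (p : ℤ) ^ (m + 1) * (p - 1) * ((p : ℤ) ^ n - p) :=
    mul_nonneg (mul_nonneg (by positivity) (by linarith)) (by linarith)
  have hdefect := rrDefect_monotone hp1 n (Nat.le_add_right m 2)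
  have key : ((p : ℤ) ^ (n + 1) - 1) *
        ((p ^ (m + 1) + rr p n (m + 2) : ℕ) - (p ^ (m + 2) + rr p n m : ℕ)) =
      (p : ℤ) ^ (m + 1) * (p - 1) * ((p : ℤ) ^ n - p) +
        (rrDefect p n (m + 2) - rrDefect p n m) := by
    push_cast
    linear_combination pow_sub_one_mul_rr hp1 n (m + 2) - pow_sub_one_mul_rr hp1 n m
  have hprod : 0 ≤ ((p : ℤ) ^ (n + 1) - 1) *
      ((p ^ (m + 1) + rr p n (m + 2) : ℕ) - (p ^ (m + 2) + rr p n m : ℕ)) := by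
    rw [key]
    linarith
  exact_mod_cast sub_nonneg.1 (nonneg_of_mul_nonneg_right hprod hD)

theorem too_short_general (p n : ℕ) (hp : p.Prime) (hn : 2 ≤ n) (j : ℕ) (hj : 1 ≤ j) :
    p ^ (j + 1) - rr p n (j + 1) ≤ rr' p n (j - 1) := by
  obtain ⟨m, rfl⟩ : ∃ m, j = m + 1 := ⟨j - 1, by omega⟩
  have := pow_add_two_add_rr_le hp.two_le (by omega : 1 ≤ n) m
  show p ^ (m + 2) - rr p n (m + 2) ≤ p ^ (m + 1) - rr p n m
  omega

/-- For an odd prime `p` and `n >= 2`: `p^{j+1} - r(j+1) <= r'(j-1)` for all `j >= 1`. -/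
theorem too_short (p n : ℕ) (hp : p.Prime) (hodd : Odd p) (hn : 2 ≤ n) (j : ℕ) (hj : 1 ≤ j) :
    p ^ (j + 1) - rr p n (j + 1) ≤ rr' p n (j - 1) :=
  too_short_general p n hp hn j hj
end
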